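/- arXiv:1211.0649 — 2 statements merged into one kernel-verified Lean document; each statement's English description precedes it below -/
import Mathlib

section
/- The j-th term of Steenrod's cup-one product of basis cochains α = (α₀,…,α_p)* and β = (β₀,…,β_q)* is nonzero only if β₁β₂⋯β_q = α_{j+1} and α_{j+2}⋯α_pα₀α₁⋯α_j = β₀, in which case (α ∪₁ β)_j = (α₀, α₁, …, α_j, β₁, …, β_q, α_{j+2}, …, α_p)*. Consequently the image subcomplex I_* = Im(Φ_*) is closed under the cup-one product. -/
/-! Common definitions: cochain complexes computing Hochschild cohomology of a
group ring `k[G]`, the inner product, the map `Φ`, and the various products. -/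

noncomputable section Defs

variable (k G : Type) [CommRing k] [Group G]

/-- The bilinear inner product on `k[G]`, extending `⟨g, h⟩ = 1` if `h = g⁻¹`
and `0` otherwise: `⟨a, b⟩ = Σ_g a_g · b_{g⁻¹}`. -/
def ip (a b : MonoidAlgebra k G) : k :=
  Finsupp.sum a.coeff fun g c => c * b.coeff g⁻¹

/-- Hochschild cochains `Hom_k(k[G]^{⊗n}, k[G])`, identified with functions on
the `k`-basis `G^n` of `k[G]^{⊗n}`. -/
abbrev Cochain (n : ℕ) := (Fin n → G) → MonoidAlgebra k G

/-- The `i`-th face of the (cyclic) bar construction for `0 ≤ i ≤ n-1`: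
merge entries `i` and `i+1`. -/
def contract {n : ℕ} (g : Fin (n + 1) → G) (i : Fin n) : Fin n → G :=
  fun j => if j = i then g j.castSucc * g j.succ
    else if (j : ℕ) < (i : ℕ) then g j.castSucc else g j.succ

/-- The Hochschild coboundary `δ` on `Hom_k(k[G]^{⊗n}, k[G])`. -/
def hdelta {n : ℕ} (f : Cochain k G n) : Cochain k G (n + 1) :=
  fun a => MonoidAlgebra.of k G (a 0) * f (Fin.tail a)
    + ∑ i : Fin n, ((-1 : ℤ) ^ ((i : ℕ) + 1)) • f (contract G a i)
    + ((-1 : ℤ) ^ (n + 1)) • (f (Fin.init a) * MonoidAlgebra.of k G (a (Fin.last n)))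

/-- The coboundary `b^*` on `Hom_k(k[G]^{⊗(n+1)}, k)`, dual to the cyclic
Hochschild boundary `b`. -/
def bstar {n : ℕ} (φ : (Fin (n + 1) → G) → k) : (Fin (n + 2) → G) → k :=
  (∑ i : Fin (n + 1), ((-1 : ℤ) ^ (i : ℕ)) • fun g => φ (contract G g i))
    + ((-1 : ℤ) ^ (n + 1)) •
      fun g => φ (fun j => if j = 0 then g (Fin.last (n + 1)) * g 0 else g j.castSucc)

/-- The cochain map `Φ_n(f)(g₀,…,g_n) = ⟨g₀, f(g₁,…,g_n)⟩`. -/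
def Phi {n : ℕ} (f : Cochain k G n) : (Fin (n + 1) → G) → k :=
  fun g => ip k G (MonoidAlgebra.of k G (g 0)) (f (Fin.tail g))

/-- The basis cochain `(g₀, g₁, …, g_n)^# : k[G]^{⊗n} → k[G]`. -/
def sharp {n : ℕ} [DecidableEq G] (g₀ : G) (gs : Fin n → G) : Cochain k G n :=
  fun h => if h = gs then MonoidAlgebra.of k G g₀ else 0

/-- The dual basis cochain `(t₀, …, t_{m-1})^* : k[G]^{⊗m} → k`. -/
def dstar {m : ℕ} [DecidableEq G] (t : Fin m → G) : (Fin m → G) → k :=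
  fun h => if h = t then (1 : k) else 0

/-- The map `Ψ`, recorded by its matrix of coefficients:
`Ψ(α)(g₁,…,g_n)` is the element of `k[G]` whose coefficient at `x` is
`α(x⁻¹, g₁, …, g_n)`; on basis elements `Ψ((g₀,…,g_n)^*) = (g₀⁻¹,g₁,…,g_n)^#`. -/
def Psi {n : ℕ} (α : (Fin (n + 1) → G) → k) : (Fin n → G) → G → k :=
  fun gs x => α (Fin.cons x⁻¹ gs)

/-- The simplicial cup product on `Hom_k(k[G]^{⊗(•+1)}, k)`:
`(α ∪ β)(g₀,…,g_{p+q}) = α(g_{p+1}⋯g_{p+q}g₀, g₁,…,g_p) · β(g₀⋯g_p, g_{p+1},…,g_{p+q})`. -/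
def cup {p q : ℕ} (α : (Fin (p + 1) → G) → k) (β : (Fin (q + 1) → G) → k) :
    (Fin (p + q + 1) → G) → k :=
  fun g =>
    α (Fin.cons
        (((List.ofFn fun t : Fin q => g ⟨p + 1 + (t : ℕ), by have := t.isLt; omega⟩).prod) * g 0)
        (fun i : Fin p => g ⟨(i : ℕ) + 1, by have := i.isLt; omega⟩))
    * β (Fin.cons
        ((List.ofFn fun t : Fin (p + 1) => g ⟨(t : ℕ), by have := t.isLt; omega⟩).prod)
        (fun i : Fin q => g ⟨p + 1 + (i : ℕ), by have := i.isLt; omega⟩))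

/-- The Gerstenhaber (cup) product on Hochschild cochains:
`(f ∪_G g)(a₁,…,a_{p+q}) = f(a₁,…,a_p) · g(a_{p+1},…,a_{p+q})`. -/
def cupG {p q : ℕ} (f : Cochain k G p) (g : Cochain k G q) : Cochain k G (p + q) :=
  fun a => f (a ∘ Fin.castAdd q) * g (a ∘ Fin.natAdd p)

/-- The `j`-th term of Steenrod's cup-one product, for `α` of degree `p+1` and
`β` of degree `q` (so `0 ≤ j ≤ (p+1)-1`):
`(α ∪₁ β)_j(σ) = α(σ₀,…,σ_j, σ_{j+1}⋯σ_{j+q}, σ_{j+q+1},…) · β(σ_{j+q+1}⋯σ_{p+q}σ₀⋯σ_j, σ_{j+1},…,σ_{j+q})`. -/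
def cupOneTerm {p q : ℕ} (α : (Fin (p + 2) → G) → k) (β : (Fin (q + 1) → G) → k)
    (j : Fin (p + 1)) : (Fin (p + q + 1) → G) → k :=
  fun σ =>
    α (fun i : Fin (p + 2) =>
        if h1 : (i : ℕ) ≤ (j : ℕ) then σ ⟨(i : ℕ), by have := j.isLt; omega⟩
        else if h2 : (i : ℕ) = (j : ℕ) + 1 then
          (List.ofFn fun t : Fin q =>
            σ ⟨(j : ℕ) + 1 + (t : ℕ), by have := t.isLt; have := j.isLt; omega⟩).prod
        else σ ⟨(i : ℕ) + q - 1, by have := i.isLt; omega⟩)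
    * β (Fin.cons
        (((List.ofFn fun t : Fin (p - (j : ℕ)) =>
            σ ⟨(j : ℕ) + q + 1 + (t : ℕ), by have := t.isLt; have := j.isLt; omega⟩).prod)
          * ((List.ofFn fun t : Fin ((j : ℕ) + 1) =>
            σ ⟨(t : ℕ), by have := t.isLt; have := j.isLt; omega⟩).prod))
        (fun t : Fin q =>
          σ ⟨(j : ℕ) + 1 + (t : ℕ), by have := t.isLt; have := j.isLt; omega⟩))

/-- Steenrod's cup-one product (for `α` of degree `p+1`, `β` of degree `q`):
`α ∪₁ β = Σ_j (-1)^{((p+1)-1-j)(q-1)} (α ∪₁ β)_j`.  (The exponent is written as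
`(p-j)*(q+1)`, which has the same parity as `((p+1)-1-j)*(q-1)` for every `q ≥ 0`.) -/
def cupOne {p q : ℕ} (α : (Fin (p + 2) → G) → k) (β : (Fin (q + 1) → G) → k) :
    (Fin (p + q + 1) → G) → k :=
  fun σ => ∑ j : Fin (p + 1),
    ((-1 : ℤ) ^ ((p - (j : ℕ)) * (q + 1))) • cupOneTerm k G α β j σ

/-- Gerstenhaber's `j`-th composition `f ∘_{(j)} g` (for `f` of degree `p+1`,
`g` of degree `q`): substitute `g` into the `j`-th slot of (the multilinear
extension of) `f`. -/
def compAt {p q : ℕ} (f : Cochain k G (p + 1)) (g : Cochain k G q) (j : Fin (p + 1)) :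
    Cochain k G (p + q) :=
  fun a => Finsupp.sum
    (g fun t : Fin q => a ⟨(j : ℕ) + (t : ℕ), by have := t.isLt; have := j.isLt; omega⟩).coeff
    (fun x c => c • f (fun i : Fin (p + 1) =>
      if h1 : (i : ℕ) < (j : ℕ) then a ⟨(i : ℕ), by have := j.isLt; omega⟩
      else if h2 : (i : ℕ) = (j : ℕ) then x
      else a ⟨(i : ℕ) + q - 1, by have := i.isLt; omega⟩))

/-- Gerstenhaber's pre-Lie product `f ∘ g = Σ_j (-1)^{(p-1-j)(q-1)} f ∘_{(j)} g`
(`f` of degree `p+1`, `g` of degree `q`; the exponent `(p-j)*(q+1)` has the same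
parity as `((p+1)-1-j)*(q-1)`). -/
def preLie {p q : ℕ} (f : Cochain k G (p + 1)) (g : Cochain k G q) : Cochain k G (p + q) :=
  fun a => ∑ j : Fin (p + 1),
    ((-1 : ℤ) ^ ((p - (j : ℕ)) * (q + 1))) • compAt k G f g j a

/-- The face maps of the cyclic bar construction `N^cy_*(G)`, from
`N^cy_{n+1}(G) = G^{n+2}` to `N^cy_n(G) = G^{n+1}`. -/
def cycFace {n : ℕ} (i : Fin (n + 2)) (g : Fin (n + 2) → G) : Fin (n + 1) → G :=
  if h : (i : ℕ) = n + 1 then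
    fun j => if j = 0 then g (Fin.last (n + 1)) * g 0 else g j.castSucc
  else contract G g ⟨(i : ℕ), by have := i.isLt; omega⟩

/-- The degeneracy maps of the cyclic bar construction: insert the identity
after position `i`. -/
def cycDegen {n : ℕ} (i : Fin (n + 1)) (g : Fin (n + 1) → G) : Fin (n + 2) → G :=
  fun j => if h1 : (j : ℕ) ≤ (i : ℕ) then g ⟨(j : ℕ), by have := i.isLt; omega⟩
    else if h2 : (j : ℕ) = (i : ℕ) + 1 then 1
    else g ⟨(j : ℕ) - 1, by have := j.isLt; omega⟩

/-- The simplicial map `ι : B_*(G) → N^cy_*(G)`,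
`ι(g₁,…,g_n) = ((g₁g₂⋯g_n)⁻¹, g₁, …, g_n)`. -/
def iotaMap {n : ℕ} (g : Fin n → G) : Fin (n + 1) → G :=
  Fin.cons ((List.ofFn g).prod)⁻¹ g

end Defs

/-! The arguments at which `(α ∪₁ β)_j` evaluates `α` and `β` are two faces `L σ` and `R σ` of
the simplex `σ`. The pair `(L σ, R σ)` determines `σ`: splicing `R σ` into `L σ` recovers it.
Conversely, a pair `(a, b)` is of the form `(L σ, R σ)` exactly when `b₁⋯b_q = a_{j+1}` and
`a_{j+2}⋯a_{p+1}·a₀⋯a_j = b₀`, and then `σ` is the splice of `b` into `a`. On dual basis cochains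
`(α ∪₁ β)_j` is therefore the indicator of that splice.

For the closure statement, `Im Φ` consists of the cochains `α` such that `α(x, σ₁, …, σₙ)` is
finitely supported in `x` for all fixed `σ₁, …, σₙ`. The face `L` keeps `σ₀` in place, and its
other entries do not involve `σ₀`, so every term of `α ∪₁ β` inherits this finiteness from `α`. -/

open Function (HasFiniteSupport)

theorem Fin.cons_mk_of_pos {α : Type*} {n m : ℕ} (x : α) (f : Fin n → α) (hm : 0 < m)
    (h : m < n + 1) : (Fin.cons x f : Fin (n + 1) → α) ⟨m, h⟩ = f ⟨m - 1, by omega⟩ := by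
  obtain ⟨m, rfl⟩ : ∃ m', m = m' + 1 := ⟨m - 1, by omega⟩
  exact Fin.cons_succ (α := fun _ => α) x f ⟨m, Nat.lt_of_succ_lt_succ h⟩

section CupOneFaces

variable {G : Type} [Group G] {p q : ℕ}

/- `cupOneLeftFace j σ = d_{j+1} ⋯ d_{j+q-1} σ` and
`cupOneRightFace j σ = d₀ ⋯ d_{j-1} d_{j+q+1} ⋯ d_{p+q-1} σ`, the two faces in the definition of
`cupOneTerm`. -/
def cupOneLeftFace (j : Fin (p + 1)) (σ : Fin (p + q + 1) → G) : Fin (p + 2) → G :=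
  fun i =>
    if h1 : (i : ℕ) ≤ (j : ℕ) then σ ⟨(i : ℕ), by have := j.isLt; omega⟩
    else if h2 : (i : ℕ) = (j : ℕ) + 1 then
      (List.ofFn fun t : Fin q =>
        σ ⟨(j : ℕ) + 1 + (t : ℕ), by have := t.isLt; have := j.isLt; omega⟩).prod
    else σ ⟨(i : ℕ) + q - 1, by have := i.isLt; omega⟩

def cupOneRightFace (j : Fin (p + 1)) (σ : Fin (p + q + 1) → G) : Fin (q + 1) → G :=
  Fin.cons
    (((List.ofFn fun t : Fin (p - (j : ℕ)) =>
        σ ⟨(j : ℕ) + q + 1 + (t : ℕ), by have := t.isLt; have := j.isLt; omega⟩).prod)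
      * ((List.ofFn fun t : Fin ((j : ℕ) + 1) =>
        σ ⟨(t : ℕ), by have := t.isLt; have := j.isLt; omega⟩).prod))
    (fun t : Fin q =>
      σ ⟨(j : ℕ) + 1 + (t : ℕ), by have := t.isLt; have := j.isLt; omega⟩)

def cupOneSplice (j : Fin (p + 1)) (a : Fin (p + 2) → G) (b : Fin (q + 1) → G) :
    Fin (p + q + 1) → G :=
  fun i =>
    if h1 : (i : ℕ) ≤ (j : ℕ) then a ⟨(i : ℕ), Nat.lt_succ_of_lt (Nat.lt_of_le_of_lt h1 j.isLt)⟩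
    else if h2 : (i : ℕ) ≤ (j : ℕ) + q then
      b ⟨(i : ℕ) - (j : ℕ), Nat.lt_succ_of_le (Nat.sub_le_iff_le_add'.mpr h2)⟩
    else a ⟨(i : ℕ) - q + 1, Nat.succ_lt_succ (by have := i.isLt; omega)⟩

def CupOneCompatible (j : Fin (p + 1)) (a : Fin (p + 2) → G) (b : Fin (q + 1) → G) : Prop :=
  (List.ofFn (Fin.tail b)).prod = a j.succ ∧
    (List.ofFn fun t : Fin (p - (j : ℕ)) =>
        a ⟨(j : ℕ) + 2 + (t : ℕ), by have := t.isLt; omega⟩).prod *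
      (List.ofFn fun t : Fin ((j : ℕ) + 1) =>
        a ⟨(t : ℕ), Nat.lt_succ_of_lt (Nat.lt_of_lt_of_le t.isLt j.isLt)⟩).prod = b 0

theorem cupOneSplice_faces (j : Fin (p + 1)) (σ : Fin (p + q + 1) → G) :
    cupOneSplice j (cupOneLeftFace j σ) (cupOneRightFace j σ) = σ := by
  funext ⟨i, hi⟩
  simp only [cupOneSplice, cupOneLeftFace, cupOneRightFace]
  split_ifs
  all_goals first
    | omega
    | (try rw [Fin.cons_mk_of_pos _ _ (by omega)]); exact congrArg σ (Fin.ext (by simp <;> omega))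

theorem cupOneCompatible_faces (j : Fin (p + 1)) (σ : Fin (p + q + 1) → G) :
    CupOneCompatible j (cupOneLeftFace j σ) (cupOneRightFace j σ) := by
  constructor
  · simp only [cupOneLeftFace, cupOneRightFace]
    rw [Fin.tail_cons, dif_neg (by simp), dif_pos (by simp)]
  · simp only [cupOneLeftFace, cupOneRightFace]
    rw [Fin.cons_zero]
    congr 3 <;> funext t
    · rw [dif_neg (by omega), dif_neg (by omega)]
      exact congrArg σ (Fin.ext (by simp; omega))
    · rw [dif_pos (by omega)]

theorem cupOneLeftFace_cupOneSplice {j : Fin (p + 1)} {a : Fin (p + 2) → G}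
    {b : Fin (q + 1) → G} (h : (List.ofFn (Fin.tail b)).prod = a j.succ) :
    cupOneLeftFace j (cupOneSplice j a b) = a := by
  funext ⟨i, hi⟩
  simp only [cupOneLeftFace]
  split_ifs with h1 h2
  · simp only [cupOneSplice]
    rw [dif_pos h1]
  · rw [show a ⟨i, hi⟩ = a j.succ from congrArg a (Fin.ext (by simp [h2])), ← h]
    congr 2
    funext t
    simp only [cupOneSplice]
    rw [dif_neg (by omega), dif_pos (by omega)]
    exact congrArg b (Fin.ext (by simp; omega))
  · simp only [cupOneSplice]
    rw [dif_neg (by omega), dif_neg (by omega)]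
    exact congrArg a (Fin.ext (by simp; omega))

theorem cupOneRightFace_cupOneSplice {j : Fin (p + 1)} {a : Fin (p + 2) → G}
    {b : Fin (q + 1) → G} (h : CupOneCompatible j a b) :
    cupOneRightFace j (cupOneSplice j a b) = b := by
  funext t
  induction t using Fin.cases with
  | zero =>
    rw [← h.2]
    simp only [cupOneRightFace, cupOneSplice, Fin.cons_zero]
    congr 3 <;> funext t
    · rw [dif_neg (by omega), dif_neg (by omega)]
      exact congrArg a (Fin.ext (by simp; omega))
    · rw [dif_pos (by omega)]
  | succ t =>
    simp only [cupOneRightFace, cupOneSplice, Fin.cons_succ]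
    rw [dif_neg (by omega), dif_pos (by omega)]
    exact congrArg b (Fin.ext (by simp; omega))

theorem cupOneLeftFace_cons (j : Fin (p + 1)) (x : G) (gs : Fin (p + q) → G) :
    cupOneLeftFace j (Fin.cons x gs) =
      Fin.cons x (Fin.tail (cupOneLeftFace j (Fin.cons 1 gs))) := by
  funext i
  induction i using Fin.cases with
  | zero => simp [cupOneLeftFace]
  | succ i =>
    simp only [cupOneLeftFace, Fin.tail, Fin.cons_succ, Fin.val_succ]
    split_ifs <;> simp (disch := omega) only [Fin.cons_mk_of_pos]

theorem CupOneCompatible.eq_cupOneSplice_iff {j : Fin (p + 1)} {a : Fin (p + 2) → G}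
    {b : Fin (q + 1) → G} (h : CupOneCompatible j a b) (σ : Fin (p + q + 1) → G) :
    σ = cupOneSplice j a b ↔ cupOneLeftFace j σ = a ∧ cupOneRightFace j σ = b := by
  constructor
  · rintro rfl
    exact ⟨cupOneLeftFace_cupOneSplice h.1, cupOneRightFace_cupOneSplice h⟩
  · rintro ⟨rfl, rfl⟩
    exact (cupOneSplice_faces j σ).symm

end CupOneFaces

section CupOneImage

variable {k G : Type} [CommRing k] [Group G]

theorem Phi_apply {n : ℕ} (f : Cochain k G n) (σ : Fin (n + 1) → G) :
    Phi k G f σ = (f (Fin.tail σ)).coeff (σ 0)⁻¹ := by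
  simp [Phi, ip, MonoidAlgebra.of_apply, MonoidAlgebra.coeff_single]

theorem mem_range_Phi_iff {n : ℕ} (α : (Fin (n + 1) → G) → k) :
    α ∈ Set.range (fun f : Cochain k G n => Phi k G f) ↔
      ∀ gs, HasFiniteSupport fun x => α (Fin.cons x gs) := by
  constructor
  · rintro ⟨f, rfl⟩ gs
    refine ((f gs).coeff.hasFiniteSupport.preimage inv_injective.injOn).subset fun x hx => ?_
    simpa [Phi_apply] using hx
  · intro hα
    have hΨ : ∀ gs, (Function.support (Psi k G α gs)).Finite := fun gs =>
      (hα gs).preimage inv_injective.injOn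
    refine ⟨fun gs => MonoidAlgebra.ofCoeff (Finsupp.ofSupportFinite (Psi k G α gs) (hΨ gs)), ?_⟩
    funext σ
    beta_reduce
    rw [Phi_apply, MonoidAlgebra.coeff_ofCoeff, Finsupp.ofSupportFinite_coe, Psi, inv_inv,
      Fin.cons_self_tail]

variable {p q : ℕ}

theorem cupOneTerm_apply (α : (Fin (p + 2) → G) → k) (β : (Fin (q + 1) → G) → k)
    (j : Fin (p + 1)) (σ : Fin (p + q + 1) → G) :
    cupOneTerm k G α β j σ = α (cupOneLeftFace j σ) * β (cupOneRightFace j σ) := rfl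

theorem cupOneTerm_dstar_apply [DecidableEq G] (a : Fin (p + 2) → G) (b : Fin (q + 1) → G)
    (j : Fin (p + 1)) (σ : Fin (p + q + 1) → G) :
    cupOneTerm k G (dstar k G a) (dstar k G b) j σ =
      if cupOneLeftFace j σ = a ∧ cupOneRightFace j σ = b then 1 else 0 := by
  rw [cupOneTerm_apply, dstar, dstar, ite_zero_mul_ite_zero, one_mul]

theorem hasFiniteSupport_cupOneTerm_cons {α : (Fin (p + 2) → G) → k}
    (hα : ∀ gs, HasFiniteSupport fun x => α (Fin.cons x gs)) (β : (Fin (q + 1) → G) → k)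
    (j : Fin (p + 1)) (gs : Fin (p + q) → G) :
    HasFiniteSupport fun x => cupOneTerm k G α β j (Fin.cons x gs) :=
  (hα _).subset fun x hx => by
    rw [Function.mem_support, cupOneTerm_apply, cupOneLeftFace_cons] at hx
    exact left_ne_zero_of_mul hx

theorem cupOne_mem_range_Phi {α : (Fin (p + 2) → G) → k}
    (hα : α ∈ Set.range (fun f : Cochain k G (p + 1) => Phi k G f)) (β : (Fin (q + 1) → G) → k) :
    cupOne k G α β ∈ Set.range (fun f : Cochain k G (p + q) => Phi k G f) := by
  rw [mem_range_Phi_iff] at hα ⊢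
  intro gs
  exact HasFiniteSupport.sum
    (fun j => (hasFiniteSupport_cupOneTerm_cons hα β j gs).fun_smul_right _) _

end CupOneImage

/-- the `j`-th term of the cup-one product of basis cochains
`α = (α₀,…,α_{p+1})^*` (of degree `p+1`) and `β = (β₀,…,β_q)^*` is nonzero only
if `β₁⋯β_q = α_{j+1}` and `α_{j+2}⋯α_{p+1}·α₀⋯α_j = β₀`, in which case
`(α ∪₁ β)_j = (α₀,…,α_j, β₁,…,β_q, α_{j+2},…,α_{p+1})^*`.  Consequently
`I_* = Im Φ_*` is closed under the cup-one product. -/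
theorem cupOneTerm_dstar (k G : Type) [CommRing k] [Group G] [DecidableEq G] (p q : ℕ)
    (a : Fin (p + 2) → G) (b : Fin (q + 1) → G) (j : Fin (p + 1)) :
    (cupOneTerm k G (dstar k G a) (dstar k G b) j ≠ 0 →
      (List.ofFn (Fin.tail b)).prod = a j.succ ∧
      ((List.ofFn fun t : Fin (p - (j : ℕ)) =>
          a ⟨(j : ℕ) + 2 + (t : ℕ), by have := t.isLt; have := j.isLt; omega⟩).prod *
        (List.ofFn fun t : Fin ((j : ℕ) + 1) =>
          a ⟨(t : ℕ), by have := t.isLt; have := j.isLt; omega⟩).prod = b 0))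
    ∧ (((List.ofFn (Fin.tail b)).prod = a j.succ ∧
      ((List.ofFn fun t : Fin (p - (j : ℕ)) =>
          a ⟨(j : ℕ) + 2 + (t : ℕ), by have := t.isLt; have := j.isLt; omega⟩).prod *
        (List.ofFn fun t : Fin ((j : ℕ) + 1) =>
          a ⟨(t : ℕ), by have := t.isLt; have := j.isLt; omega⟩).prod = b 0)) →
      cupOneTerm k G (dstar k G a) (dstar k G b) j =
        dstar k G (fun i : Fin (p + q + 1) =>
          if h1 : (i : ℕ) ≤ (j : ℕ) then a ⟨(i : ℕ), by have := j.isLt; omega⟩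
          else if h2 : (i : ℕ) ≤ (j : ℕ) + q then b ⟨(i : ℕ) - (j : ℕ), by omega⟩
          else a ⟨(i : ℕ) - q + 1, by have := i.isLt; omega⟩))
    ∧ ∀ (α : (Fin (p + 2) → G) → k) (β : (Fin (q + 1) → G) → k),
      α ∈ Set.range (fun f : Cochain k G (p + 1) => Phi k G f) →
      β ∈ Set.range (fun f : Cochain k G q => Phi k G f) →
      cupOne k G α β ∈ Set.range (fun f : Cochain k G (p + q) => Phi k G f) := by
  refine ⟨fun hne => ?_, fun hab => ?_, fun α β hα _ => cupOne_mem_range_Phi hα β⟩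
  · obtain ⟨σ, hσ⟩ := Function.ne_iff.mp hne
    rw [cupOneTerm_dstar_apply, Pi.zero_apply] at hσ
    obtain ⟨⟨rfl, rfl⟩, -⟩ := ite_ne_right_iff.mp hσ
    exact cupOneCompatible_faces j σ
  · funext σ
    rw [cupOneTerm_dstar_apply]
    exact if_congr (CupOneCompatible.eq_cupOneSplice_iff hab σ).symm rfl rfl
end

section
/- If α = (α₀, …, α_p)* and β = (β₀, …, β_q)* are cochains supported on BG (i.e., α₀α₁⋯α_p = e and β₀β₁⋯β_q = e in G), then Ψ_{p+q}(α ∪ β) = Ψ_p(α) ∪_G Ψ_q(β), i.e., the simplicial cup product agrees with the Gerstenhaber cup product: for f = Ψ_p(α), g = Ψ_q(β), f ∪_S g = f ∪_G g as cochains. -/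
/-! Both sides are dual basis cochains of a single point. The Gerstenhaber product of the
basis cochains `(α₀⁻¹, α₁,…,α_p)^#` and `(β₀⁻¹, β₁,…,β_q)^#` is
`(α₀⁻¹β₀⁻¹, α₁,…,α_p, β₁,…,β_q)^#`, and `Φ` sends it to `(β₀α₀, α₁,…,α_p, β₁,…,β_q)^*`.
On the other side, `α ∪ β` is nonzero at `(x, α₁,…,α_p, β₁,…,β_q)` exactly when
`β₁⋯β_q x = α₀` and `x α₁⋯α_p = β₀`; on `BG` these products are `β₀⁻¹` and `α₀⁻¹`, so both
conditions say `x = β₀α₀`. -/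

theorem Fin.append_inj {α : Type*} {m n : ℕ} {xs xs' : Fin m → α} {ys ys' : Fin n → α} :
    Fin.append xs ys = Fin.append xs' ys' ↔ xs = xs' ∧ ys = ys' := by
  refine ⟨fun h => ⟨funext fun i => ?_, funext fun i => ?_⟩, fun ⟨hx, hy⟩ => hx ▸ hy ▸ rfl⟩
  · simpa using congrFun h (Fin.castAdd n i)
  · simpa using congrFun h (Fin.natAdd m i)

theorem Fin.exists_cons_append {α : Type*} {p q : ℕ} (g : Fin (p + q + 1) → α) :
    ∃ x X Y, g = Fin.cons x (Fin.append X Y) := by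
  cases g using Fin.consCases with
  | _ x g => exact ⟨x, _, _, congrArg _ Fin.append_castAdd_natAdd.symm⟩

section

variable (k G : Type) [CommRing k]

theorem dstar_cons_cons [DecidableEq G] {n : ℕ} (y x : G) (ys xs : Fin n → G) :
    dstar k G (Fin.cons y ys) (Fin.cons x xs) = if x = y ∧ xs = ys then 1 else 0 := by
  simp only [dstar, Fin.cons_inj]

variable [Group G]

theorem cup_cons_append {p q : ℕ} (α : (Fin (p + 1) → G) → k) (β : (Fin (q + 1) → G) → k)
    (x : G) (X : Fin p → G) (Y : Fin q → G) :
    cup k G α β (Fin.cons x (Fin.append X Y)) =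
      α (Fin.cons ((List.ofFn Y).prod * x) X) * β (Fin.cons (x * (List.ofFn X).prod) Y) := by
  have hX : (fun i : Fin p => (Fin.cons x (Fin.append X Y) : Fin (p + q + 1) → G)
      ⟨i + 1, by omega⟩) = X :=
    funext fun i => Fin.cons_succ (α := fun _ => G) x (Fin.append X Y) (Fin.castAdd q i) ▸
      Fin.append_left X Y i
  have hY : (fun i : Fin q => (Fin.cons x (Fin.append X Y) : Fin (p + q + 1) → G)
      ⟨p + 1 + i, by omega⟩) = Y := by
    funext i
    rw [show (⟨p + 1 + i, by omega⟩ : Fin (p + q + 1)) = (Fin.natAdd p i).succ by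
      ext; simp; omega]
    simp
  have hprod : (List.ofFn fun t : Fin (p + 1) =>
      (Fin.cons x (Fin.append X Y) : Fin (p + q + 1) → G) ⟨t, by omega⟩).prod =
        x * (List.ofFn X).prod := by
    rw [List.ofFn_succ, List.prod_cons]
    exact congrArg (x * List.prod ·) (congrArg List.ofFn hX)
  simp only [cup, hX, hY, hprod]
  rfl

variable [DecidableEq G]

theorem Phi_sharp {n : ℕ} (x : G) (xs : Fin n → G) :
    Phi k G (sharp k G x xs) = dstar k G (Fin.cons x⁻¹ xs) := by
  funext g
  cases g using Fin.consCases with | _ y ys => ?_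
  simp only [Phi, sharp, ip, dstar_cons_cons, Fin.cons_zero, Fin.tail_cons, MonoidAlgebra.of_apply,
    MonoidAlgebra.coeff_single, Finsupp.sum_single_index, zero_mul, one_mul]
  by_cases h : ys = xs
  · simp [h, Finsupp.single_apply, eq_comm (a := x), inv_eq_iff_eq_inv]
  · simp [h]

theorem cupG_sharp_sharp {p q : ℕ} (x y : G) (xs : Fin p → G) (ys : Fin q → G) :
    cupG k G (sharp k G x xs) (sharp k G y ys) = sharp k G (x * y) (Fin.append xs ys) := by
  funext a
  obtain ⟨X, Y, rfl⟩ : ∃ X Y, a = Fin.append X Y := ⟨_, _, Fin.append_castAdd_natAdd.symm⟩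
  simp only [cupG, sharp, Function.comp_def, Fin.append_left, Fin.append_right, Fin.append_inj,
    ite_zero_mul_ite_zero, map_mul]

theorem cup_dstar_dstar_of_mul_prod_eq_one {p q : ℕ} (a₀ b₀ : G) (a : Fin p → G) (b : Fin q → G)
    (ha : a₀ * (List.ofFn a).prod = 1) (hb : b₀ * (List.ofFn b).prod = 1) :
    cup k G (dstar k G (Fin.cons a₀ a)) (dstar k G (Fin.cons b₀ b)) =
      dstar k G (Fin.cons (b₀ * a₀) (Fin.append a b)) := by
  funext g
  obtain ⟨x, X, Y, rfl⟩ := Fin.exists_cons_append g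
  have ha' := eq_inv_of_mul_eq_one_right ha
  have hb' := eq_inv_of_mul_eq_one_right hb
  simp only [cup_cons_append, dstar_cons_cons, ite_zero_mul_ite_zero, one_mul, Fin.append_inj]
  refine if_congr ⟨?_, ?_⟩ rfl rfl
  · rintro ⟨⟨hx, rfl⟩, -, rfl⟩
    exact ⟨inv_mul_eq_iff_eq_mul.mp (hb' ▸ hx), rfl, rfl⟩
  · rintro ⟨rfl, rfl, rfl⟩
    exact ⟨⟨by rw [hb', inv_mul_cancel_left], rfl⟩, by rw [ha', mul_inv_cancel_right], rfl⟩

end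

/-- if `α = (α₀,…,α_p)^*` and `β = (β₀,…,β_q)^*` are supported on
`BG` (`α₀α₁⋯α_p = e` and `β₀β₁⋯β_q = e`), then `Ψ(α ∪ β) = Ψ(α) ∪_G Ψ(β)`:
the simplicial cup product agrees with the Gerstenhaber product, i.e. for
`f = Ψ_p(α) = (α₀⁻¹, α₁,…,α_p)^#` and `g = Ψ_q(β)` one has
`f ∪_S g = f ∪_G g` as cochains.  (Applying the injective cochain map `Φ`,
this is the identity `α ∪ β = Φ(Ψ(α) ∪_G Ψ(β))`.) -/
theorem cup_eq_cupG_on_BG (k G : Type) [CommRing k] [Group G] [DecidableEq G] (p q : ℕ)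
    (a : Fin (p + 1) → G) (b : Fin (q + 1) → G)
    (ha : (List.ofFn a).prod = 1) (hb : (List.ofFn b).prod = 1) :
    cup k G (dstar k G a) (dstar k G b) =
      Phi k G (cupG k G (sharp k G (a 0)⁻¹ (Fin.tail a)) (sharp k G (b 0)⁻¹ (Fin.tail b))) := by
  cases a using Fin.consCases with | _ a₀ a => ?_
  cases b using Fin.consCases with | _ b₀ b => ?_
  simp only [List.ofFn_succ, List.prod_cons, Fin.cons_zero, Fin.cons_succ] at ha hb
  rw [cup_dstar_dstar_of_mul_prod_eq_one k G a₀ b₀ a b ha hb, Fin.cons_zero, Fin.cons_zero,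
    Fin.tail_cons, Fin.tail_cons, cupG_sharp_sharp, Phi_sharp, mul_inv_rev, inv_inv, inv_inv]
end
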